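/- Let w be the UTP weight of a trajectory visiting states s₀, …, s_{k−1} with branching factors bᵢ = |A(sᵢ)| ≥ 1, i.e., w = Π 1/bᵢ, and suppose the number of nodes generated along this trajectory is N = Σ bᵢ. If w = 1/X with X > 1, then N ≥ e · ln X, i.e., the number of generated nodes is at least −e · ln w. -/

import Mathlib

/-!
Since `log x ≤ x / e` for every `x > 0` (the tangent line of `log` through the origin touches it at
`x = e`), taking logarithms turns the weight identity `∏ bᵢ = X` into
`e · log X = ∑ e · log bᵢ ≤ ∑ bᵢ`.
-/

open Real Finset

theorem Real.exp_one_mul_log_le_self {x : ℝ} (hx : 0 < x) : exp 1 * log x ≤ x := by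
  have h := add_one_le_exp (log x - 1)
  rw [exp_sub, exp_log hx, le_div_iff₀ (exp_pos 1)] at h
  linarith

theorem Real.exp_one_mul_log_prod_le_sum {ι : Type*} (s : Finset ι) {b : ι → ℝ}
    (hb : ∀ i ∈ s, 0 < b i) : exp 1 * log (∏ i ∈ s, b i) ≤ ∑ i ∈ s, b i := by
  rw [log_prod fun i hi => (hb i hi).ne', mul_sum]
  exact sum_le_sum fun i hi => exp_one_mul_log_le_self (hb i hi)

theorem stmt_16_general (k : ℕ) (b : Fin k → ℝ) (hb : ∀ i, 1 ≤ b i)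
    (X : ℝ) (hw : (∏ i, (b i)⁻¹) = X⁻¹) :
    Real.exp 1 * Real.log X ≤ ∑ i, b i := by
  have hprod : ∏ i, b i = X := inv_injective (by rwa [← prod_inv_distrib])
  rw [← hprod]
  exact exp_one_mul_log_prod_le_sum univ fun i _ => zero_lt_one.trans_le (hb i)

theorem stmt_16 (k : ℕ) (b : Fin k → ℝ) (hb : ∀ i, 1 ≤ b i)
    (X : ℝ) (hX : 1 < X) (hw : (∏ i, (b i)⁻¹) = X⁻¹) :
    Real.exp 1 * Real.log X ≤ ∑ i, b i :=
  stmt_16_general k b hb X hw
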